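/- arXiv:math/0610896 — 3 statements merged into one kernel-verified Lean document; each statement's English description precedes it below -/
import Mathlib

section
/- Let η: U_q(E) → C be an algebra homomorphism with η(E) ≠ 0 and U_{q,η}(E) = ker η. Then U_q(f(K)) = U_q(F, K^{±1}) ⊕ U_q(f(K))·U_{q,η}(E) as a direct sum of vector spaces. -/
noncomputable section

inductive UqGen : Type
  | E : UqGen
  | F : UqGen
  | K : UqGen
  | Kinv : UqGen

/-- `lpow x xinv n` is `x ^ n` for `n ≥ 0` and `xinv ^ (-n)` for `n < 0`, used to
evaluate a Laurent polynomial at an invertible element `x` with inverse `xinv`. -/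
def lpow {A : Type*} [Monoid A] (x xinv : A) (n : ℤ) : A :=
  if 0 ≤ n then x ^ n.toNat else xinv ^ (-n).toNat

open FreeAlgebra in
/-- The defining relations of `U_q(f(K))`, where the Laurent polynomial `f` is given by
its finitely supported coefficient function `f : ℤ →₀ ℂ`. -/
inductive UqfRel (q : ℂ) (f : ℤ →₀ ℂ) : FreeAlgebra ℂ UqGen → FreeAlgebra ℂ UqGen → Prop
  | KE : UqfRel q f (ι ℂ UqGen.K * ι ℂ UqGen.E) (q ^ 2 • (ι ℂ UqGen.E * ι ℂ UqGen.K))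
  | KF : UqfRel q f (ι ℂ UqGen.K * ι ℂ UqGen.F) ((q ^ 2)⁻¹ • (ι ℂ UqGen.F * ι ℂ UqGen.K))
  | KKinv : UqfRel q f (ι ℂ UqGen.K * ι ℂ UqGen.Kinv) 1
  | KinvK : UqfRel q f (ι ℂ UqGen.Kinv * ι ℂ UqGen.K) 1
  | EF : UqfRel q f (ι ℂ UqGen.E * ι ℂ UqGen.F - ι ℂ UqGen.F * ι ℂ UqGen.E)
      (f.sum fun i c => c • lpow (ι ℂ UqGen.K) (ι ℂ UqGen.Kinv) i)

/-- The algebra `U_q(f(K))`. -/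
abbrev Uqf (q : ℂ) (f : ℤ →₀ ℂ) : Type := RingQuot (UqfRel q f)

def Eg (q : ℂ) (f : ℤ →₀ ℂ) : Uqf q f := RingQuot.mkAlgHom ℂ (UqfRel q f) (FreeAlgebra.ι ℂ UqGen.E)
def Fg (q : ℂ) (f : ℤ →₀ ℂ) : Uqf q f := RingQuot.mkAlgHom ℂ (UqfRel q f) (FreeAlgebra.ι ℂ UqGen.F)
def Kg (q : ℂ) (f : ℤ →₀ ℂ) : Uqf q f := RingQuot.mkAlgHom ℂ (UqfRel q f) (FreeAlgebra.ι ℂ UqGen.K)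
def Kinvg (q : ℂ) (f : ℤ →₀ ℂ) : Uqf q f := RingQuot.mkAlgHom ℂ (UqfRel q f) (FreeAlgebra.ι ℂ UqGen.Kinv)


/-! Let `v` be a vector with `E v = η(E) v`. The relations force `U_q(f(K))` to act on the
space with basis `e a b`, standing for `F ^ a K ^ b v`, by explicit operators, and these
operators do satisfy the relations. The orbit map `x ↦ x v` sends `F ^ a K ^ b` to `e a b`
and kills `U_q(f(K)) · ker η`, so `U_q(F, K^{±1})` meets that left ideal trivially.
Conversely `U_q(F, K^{±1}) + U_q(f(K)) · ker η` contains `1` and is stable under left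
multiplication by the generators: for `E` because
`E F ^ a K ^ b ∈ q ^ (-2b) F ^ a K ^ b E + U_q(F, K^{±1})` and `E - η(E) ∈ ker η`. -/

theorem lpow_units_eq_zpow {A : Type*} [Monoid A] (u : Aˣ) (n : ℤ) :
    lpow (u : A) (↑u⁻¹ : A) n = ((u ^ n : Aˣ) : A) := by
  unfold lpow
  split_ifs with h
  · lift n to ℕ using h
    simp
  · obtain ⟨m, rfl⟩ : ∃ m : ℕ, n = -m := ⟨(-n).toNat, by omega⟩
    simp [← inv_pow]

theorem map_lpow {F A B : Type*} [Monoid A] [Monoid B] [FunLike F A B] [MonoidHomClass F A B]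
    (g : F) (x y : A) (n : ℤ) : g (lpow x y n) = lpow (g x) (g y) n := by
  unfold lpow; split_ifs <;> simp [map_pow]

theorem lpow_mem {A S : Type*} [Monoid A] [SetLike S A] [SubmonoidClass S A] {s : S} {x y : A}
    (hx : x ∈ s) (hy : y ∈ s) (n : ℤ) : lpow x y n ∈ s := by
  unfold lpow; split_ifs <;> exact pow_mem ‹_› _

section TwistedCommutation

variable {𝕜 A : Type*} [Field 𝕜] [Ring A] [Algebra 𝕜 A] {c d : 𝕜} {x y g : A}

theorem mul_mul_eq_smul (hx : x * g = c • (g * x)) (hy : y * g = d • (g * y)) :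
    x * y * g = (c * d) • (g * (x * y)) := by
  rw [mul_assoc, hy, mul_smul_comm, ← mul_assoc, hx, smul_mul_assoc, smul_smul, mul_assoc,
    mul_comm d]

theorem mul_pow_eq_smul (h : x * g = c • (g * x)) (n : ℕ) : x * g ^ n = c ^ n • (g ^ n * x) := by
  induction n with
  | zero => simp
  | succ n ih =>
    rw [pow_succ, ← mul_assoc, ih, smul_mul_assoc, mul_assoc, h, mul_smul_comm, smul_smul,
      ← mul_assoc, pow_succ]

theorem units_zpow_mul_eq_smul {u : Aˣ} (hc : c ≠ 0) (h : ↑u * g = c • (g * ↑u)) (n : ℤ) :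
    ↑(u ^ n) * g = c ^ n • (g * ↑(u ^ n)) := by
  have hinv : ↑u⁻¹ * g = c⁻¹ • (g * ↑u⁻¹) := by
    have : g * ↑u⁻¹ = c • (↑u⁻¹ * g) := by
      calc g * ↑u⁻¹ = ↑u⁻¹ * (↑u * g) * ↑u⁻¹ := by simp [← mul_assoc]
        _ = c • (↑u⁻¹ * g) := by rw [h, mul_smul_comm, smul_mul_assoc]; simp [mul_assoc]
    rw [this, smul_smul, inv_mul_cancel₀ hc, one_smul]
  induction n using Int.induction_on with
  | zero => simp
  | succ n ih => rw [zpow_add_one, Units.val_mul, mul_mul_eq_smul ih h, zpow_add_one₀ hc]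
  | pred n ih =>
    rw [sub_eq_add_neg, zpow_add, zpow_neg_one, Units.val_mul, mul_mul_eq_smul ih hinv,
      zpow_add₀ hc, zpow_neg_one]

theorem mul_units_zpow_eq_smul {u : Aˣ} (hc : c ≠ 0) (h : ↑u * g = c • (g * ↑u)) (n : ℤ) :
    g * ↑(u ^ n) = c ^ (-n) • (↑(u ^ n) * g) := by
  rw [units_zpow_mul_eq_smul hc h, smul_smul, zpow_neg, inv_mul_cancel₀ (zpow_ne_zero n hc),
    one_smul]

end TwistedCommutation

section LeftMultiplication

variable {R A : Type*} [CommSemiring R] [Semiring A] [Algebra R A] {W : Submodule R A} {x w : A}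

theorem mul_mem_of_mem_span {S : Set A} (hS : ∀ s ∈ S, x * s ∈ W) (hw : w ∈ Submodule.span R S) :
    x * w ∈ W :=
  (Submodule.span_le (p := W.comap (LinearMap.mulLeft R x))).mpr hS hw

theorem mul_mem_of_mem_adjoin {s : Set A} (hs : ∀ y ∈ s, ∀ w ∈ W, y * w ∈ W)
    (hx : x ∈ Algebra.adjoin R s) (hw : w ∈ W) : x * w ∈ W := by
  induction hx using Algebra.adjoin_induction generalizing w with
  | mem y hy => exact hs y hy w hw
  | algebraMap r =>
    rw [Algebra.algebraMap_eq_smul_one, smul_mul_assoc, one_mul]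
    exact W.smul_mem r hw
  | add y z _ _ hy hz => rw [add_mul]; exact add_mem (hy hw) (hz hw)
  | mul y z _ _ hy hz => rw [mul_assoc]; exact hy (hz hw)

end LeftMultiplication

section Characters

variable {R A M : Type*} [CommSemiring R] [Semiring A] [Algebra R A] [AddCommMonoid M]
  [Module R M] {S : Subalgebra R A}

def spanMulKer (η : S →ₐ[R] R) : Submodule R A :=
  Submodule.span R {z | ∃ (u : A) (x : S), η x = 0 ∧ z = u * (x : A)}

theorem mul_mem_spanMulKer {η : S →ₐ[R] R} (y : A) {z : A} (hz : z ∈ spanMulKer η) :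
    y * z ∈ spanMulKer η :=
  mul_mem_of_mem_span (by
    rintro _ ⟨u, x, hx, rfl⟩
    exact Submodule.subset_span ⟨y * u, x, hx, (mul_assoc _ _ _).symm⟩) hz

theorem apply_eq_zero_of_mem_spanMulKer (ρ : A →ₐ[R] Module.End R M) {η : S →ₐ[R] R} {v : M}
    (hv : ∀ x : S, ρ x v = η x • v) {z : A} (hz : z ∈ spanMulKer η) : ρ z v = 0 := by
  refine (Submodule.span_le (p := LinearMap.ker (LinearMap.applyₗ v ∘ₗ ρ.toLinearMap))).mpr
    ?_ hz
  rintro _ ⟨u, x, hx, rfl⟩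
  simp [hv, hx]

theorem apply_eq_smul_of_mem_adjoin_singleton (ρ : A →ₐ[R] Module.End R M) {g : A}
    (η : Algebra.adjoin R {g} →ₐ[R] R) {v : M}
    (hv : ρ g v = η ⟨g, Algebra.self_mem_adjoin_singleton R g⟩ • v)
    (x : Algebra.adjoin R {g}) : ρ x v = η x • v := by
  obtain ⟨x, hx⟩ := x
  induction hx using Algebra.adjoin_induction with
  | mem y hy => obtain rfl := Set.mem_singleton_iff.mp hy; exact hv
  | algebraMap r =>
    rw [AlgHom.commutes, Module.algebraMap_end_apply]
    exact congrArg (· • v) (AlgHom.commutes η r).symm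
  | add x y hx hy ihx ihy =>
    rw [map_add, LinearMap.add_apply, ihx, ihy, ← add_smul]
    exact congrArg (· • v) (map_add η ⟨x, hx⟩ ⟨y, hy⟩).symm
  | mul x y hx hy ihx ihy =>
    rw [map_mul, Module.End.mul_apply, ihy, map_smul, ihx, smul_smul, mul_comm]
    exact congrArg (· • v) (map_mul η ⟨x, hx⟩ ⟨y, hy⟩).symm

end Characters

namespace Uqf

open Finsupp

variable {q : ℂ} {f : ℤ →₀ ℂ}

section Relations

variable (q f)

theorem K_mul_E : Kg q f * Eg q f = q ^ 2 • (Eg q f * Kg q f) := by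
  simpa [Kg, Eg] using RingQuot.mkAlgHom_rel ℂ (UqfRel.KE (q := q) (f := f))

theorem K_mul_F : Kg q f * Fg q f = (q ^ 2)⁻¹ • (Fg q f * Kg q f) := by
  simpa [Kg, Fg] using RingQuot.mkAlgHom_rel ℂ (UqfRel.KF (q := q) (f := f))

theorem K_mul_Kinv : Kg q f * Kinvg q f = 1 := by
  simpa [Kg, Kinvg] using RingQuot.mkAlgHom_rel ℂ (UqfRel.KKinv (q := q) (f := f))

theorem Kinv_mul_K : Kinvg q f * Kg q f = 1 := by
  simpa [Kg, Kinvg] using RingQuot.mkAlgHom_rel ℂ (UqfRel.KinvK (q := q) (f := f))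

theorem E_mul_F_sub_F_mul_E : Eg q f * Fg q f - Fg q f * Eg q f
    = f.sum fun i c => c • lpow (Kg q f) (Kinvg q f) i := by
  simpa [Eg, Fg, Kg, Kinvg, map_finsuppSum, map_lpow] using
    RingQuot.mkAlgHom_rel ℂ (UqfRel.EF (q := q) (f := f))

def unitK : (Uqf q f)ˣ := ⟨Kg q f, Kinvg q f, K_mul_Kinv q f, Kinv_mul_K q f⟩

theorem lpow_K_Kinv (n : ℤ) : lpow (Kg q f) (Kinvg q f) n = ↑(unitK q f ^ n) :=
  lpow_units_eq_zpow (unitK q f) n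

theorem adjoin_range_mkAlgHom_ι :
    Algebra.adjoin ℂ (Set.range fun g => RingQuot.mkAlgHom ℂ (UqfRel q f) (FreeAlgebra.ι ℂ g))
      = ⊤ := by
  rw [Set.range_comp' (RingQuot.mkAlgHom ℂ (UqfRel q f)) (FreeAlgebra.ι ℂ), Algebra.adjoin_image,
    FreeAlgebra.adjoin_range_ι, Algebra.map_top, AlgHom.range_eq_top]
  exact RingQuot.mkAlgHom_surjective ℂ (UqfRel q f)

end Relations

def mon (q : ℂ) (f : ℤ →₀ ℂ) (p : ℕ × ℤ) : Uqf q f := Fg q f ^ p.1 * ↑(unitK q f ^ p.2)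

theorem mon_mul_mon (hq : q ≠ 0) (p r : ℕ × ℤ) :
    mon q f p * mon q f r = ((q ^ 2)⁻¹ ^ r.1) ^ p.2 • mon q f (p + r) := by
  have hKF : ↑(unitK q f ^ p.2) * Fg q f ^ r.1
      = ((q ^ 2)⁻¹ ^ r.1) ^ p.2 • (Fg q f ^ r.1 * ↑(unitK q f ^ p.2)) :=
    units_zpow_mul_eq_smul (pow_ne_zero _ (inv_ne_zero (pow_ne_zero 2 hq)))
      (mul_pow_eq_smul (K_mul_F q f) r.1) p.2
  calc mon q f p * mon q f r
      = Fg q f ^ p.1 * (↑(unitK q f ^ p.2) * Fg q f ^ r.1) * ↑(unitK q f ^ r.2) := by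
        simp only [mon, mul_assoc]
    _ = _ := by
        rw [hKF, mon, Prod.fst_add, Prod.snd_add, pow_add, zpow_add, Units.val_mul]
        simp only [mul_smul_comm, smul_mul_assoc, mul_assoc]

theorem F_eq_mon : Fg q f = mon q f (1, 0) := by simp [mon]
theorem K_eq_mon : Kg q f = mon q f (0, 1) := by simp [mon, unitK]
theorem Kinv_eq_mon : Kinvg q f = mon q f (0, -1) := by simp [mon, unitK]

abbrev negBorel (q : ℂ) (f : ℤ →₀ ℂ) : Subalgebra ℂ (Uqf q f) :=
  Algebra.adjoin ℂ {Fg q f, Kg q f, Kinvg q f}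

theorem lpow_K_Kinv_mem_negBorel (n : ℤ) : lpow (Kg q f) (Kinvg q f) n ∈ negBorel q f :=
  lpow_mem (Algebra.subset_adjoin (by simp)) (Algebra.subset_adjoin (by simp)) n

theorem mon_mem_negBorel (p : ℕ × ℤ) : mon q f p ∈ negBorel q f :=
  mul_mem (pow_mem (Algebra.subset_adjoin (by simp)) _)
    (lpow_K_Kinv q f p.2 ▸ lpow_K_Kinv_mem_negBorel p.2)

theorem negBorel_le_span_mon (hq : q ≠ 0) :
    Subalgebra.toSubmodule (negBorel q f) ≤ Submodule.span ℂ (Set.range (mon q f)) := by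
  intro x hx
  have hone : (1 : Uqf q f) ∈ Submodule.span ℂ (Set.range (mon q f)) :=
    Submodule.subset_span ⟨0, by simp [mon]⟩
  have hgen : ∀ y ∈ ({Fg q f, Kg q f, Kinvg q f} : Set (Uqf q f)),
      ∀ w ∈ Submodule.span ℂ (Set.range (mon q f)),
        y * w ∈ Submodule.span ℂ (Set.range (mon q f)) := by
    rintro y hy w hw
    obtain ⟨r, rfl⟩ : ∃ r, y = mon q f r := by
      rcases hy with rfl | rfl | rfl
      exacts [⟨_, F_eq_mon⟩, ⟨_, K_eq_mon⟩, ⟨_, Kinv_eq_mon⟩]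
    refine mul_mem_of_mem_span ?_ hw
    rintro _ ⟨p, rfl⟩
    rw [mon_mul_mon hq]
    exact Submodule.smul_mem _ _ (Submodule.subset_span ⟨_, rfl⟩)
  simpa using mul_mem_of_mem_adjoin hgen hx hone

theorem E_mul_F_pow_sub_mem (n : ℕ) :
    Eg q f * Fg q f ^ n - Fg q f ^ n * Eg q f ∈ negBorel q f := by
  have hF : Fg q f ∈ negBorel q f := Algebra.subset_adjoin (by simp)
  have hEF : Eg q f * Fg q f - Fg q f * Eg q f ∈ negBorel q f := by
    rw [E_mul_F_sub_F_mul_E]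
    exact sum_mem fun i _ => Subalgebra.smul_mem _ (lpow_K_Kinv_mem_negBorel i) _
  induction n with
  | zero => simp
  | succ n ih =>
    have : Eg q f * Fg q f ^ (n + 1) - Fg q f ^ (n + 1) * Eg q f
        = (Eg q f * Fg q f ^ n - Fg q f ^ n * Eg q f) * Fg q f
          + Fg q f ^ n * (Eg q f * Fg q f - Fg q f * Eg q f) := by
      simp only [pow_succ, mul_sub, sub_mul, mul_assoc]; abel
    rw [this]
    exact add_mem (mul_mem ih hF) (mul_mem (pow_mem hF n) hEF)

theorem E_mul_mon_sub_mem (hq : q ≠ 0) (p : ℕ × ℤ) :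
    Eg q f * mon q f p - (q ^ 2) ^ (-p.2) • (mon q f p * Eg q f) ∈ negBorel q f := by
  have hEK : Eg q f * ↑(unitK q f ^ p.2) = (q ^ 2) ^ (-p.2) • (↑(unitK q f ^ p.2) * Eg q f) :=
    mul_units_zpow_eq_smul (pow_ne_zero 2 hq) (K_mul_E q f) p.2
  have : Eg q f * mon q f p - (q ^ 2) ^ (-p.2) • (mon q f p * Eg q f)
      = (Eg q f * Fg q f ^ p.1 - Fg q f ^ p.1 * Eg q f) * ↑(unitK q f ^ p.2) := by
    unfold mon
    rw [sub_mul, mul_assoc (Fg q f ^ p.1), mul_assoc (Fg q f ^ p.1), hEK, mul_smul_comm,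
      ← mul_assoc, ← mul_assoc]
  rw [this, ← lpow_K_Kinv]
  exact mul_mem (E_mul_F_pow_sub_mem p.1) (lpow_K_Kinv_mem_negBorel p.2)

local notation "V" => ℕ × ℤ →₀ ℂ

def e (a : ℕ) (b : ℤ) : V := single (a, b) 1

theorem end_ext {φ ψ : Module.End ℂ V} (h : ∀ a b, φ (e a b) = ψ (e a b)) : φ = ψ :=
  lhom_ext' fun p => LinearMap.ext_ring (h p.1 p.2)

section Operators

variable {t μ : ℂ} {a : ℕ} {b : ℤ}

/- The action of `F`, `K`, `K⁻¹`, `E` on `e a b = F ^ a K ^ b v`, where `t = q ^ 2` and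
`E v = μ v`; the sum in `opE` is
`[E, F ^ a] K ^ b v = ∑_{j < a} F ^ (a - 1 - j) f(K) F ^ j K ^ b v`. -/
def opF : Module.End ℂ V := linearCombination ℂ fun p => e (p.1 + 1) p.2

def opK (t : ℂ) : Module.End ℂ V :=
  linearCombination ℂ fun p => t ^ (-(p.1 : ℤ)) • e p.1 (p.2 + 1)

def opKinv (t : ℂ) : Module.End ℂ V :=
  linearCombination ℂ fun p => t ^ (p.1 : ℤ) • e p.1 (p.2 - 1)

def opE (t : ℂ) (f : ℤ →₀ ℂ) (μ : ℂ) : Module.End ℂ V := linearCombination ℂ fun p =>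
  (μ * t ^ (-p.2)) • e p.1 p.2 +
    ∑ j ∈ Finset.range p.1, f.sum fun i c => (c * t ^ (-(i * j))) • e (p.1 - 1) (p.2 + i)

@[simp] theorem opF_e : opF (e a b) = e (a + 1) b := by simp [opF, e]

@[simp] theorem opK_e : opK t (e a b) = t ^ (-(a : ℤ)) • e a (b + 1) := by simp [opK, e]

@[simp] theorem opKinv_e : opKinv t (e a b) = t ^ (a : ℤ) • e a (b - 1) := by simp [opKinv, e]

theorem opE_e : opE t f μ (e a b) = (μ * t ^ (-b)) • e a b +
    ∑ j ∈ Finset.range a, f.sum fun i c => (c * t ^ (-(i * j))) • e (a - 1) (b + i) := by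
  simp [opE, e]

theorem opF_pow_e (n : ℕ) : (opF ^ n) (e a b) = e (a + n) b := by
  induction n with
  | zero => simp
  | succ n ih => rw [pow_succ', Module.End.mul_apply, ih, opF_e, add_assoc]

theorem opK_pow_e (ht : t ≠ 0) (n : ℕ) :
    (opK t ^ n) (e a b) = t ^ (-(a * n : ℤ)) • e a (b + n) := by
  induction n with
  | zero => simp
  | succ n ih =>
    rw [pow_succ', Module.End.mul_apply, ih, map_smul, opK_e, smul_smul, ← zpow_add₀ ht]
    push_cast; ring_nf

theorem opKinv_pow_e (ht : t ≠ 0) (n : ℕ) :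
    (opKinv t ^ n) (e a b) = t ^ (a * n : ℤ) • e a (b - n) := by
  induction n with
  | zero => simp
  | succ n ih =>
    rw [pow_succ', Module.End.mul_apply, ih, map_smul, opKinv_e, smul_smul, ← zpow_add₀ ht]
    push_cast; ring_nf

theorem lpow_opK_opKinv_e (ht : t ≠ 0) (n : ℤ) :
    lpow (opK t) (opKinv t) n (e a b) = t ^ (-(a * n)) • e a (b + n) := by
  unfold lpow
  split_ifs with h
  · lift n to ℕ using h
    simpa using opK_pow_e ht n
  · obtain ⟨m, rfl⟩ : ∃ m : ℕ, n = -m := ⟨(-n).toNat, by omega⟩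
    simpa [sub_eq_add_neg] using opKinv_pow_e ht m

theorem opK_mul_opKinv (ht : t ≠ 0) : opK t * opKinv t = 1 :=
  end_ext fun a b => by simp [smul_smul, ht]

theorem opKinv_mul_opK (ht : t ≠ 0) : opKinv t * opK t = 1 :=
  end_ext fun a b => by simp [smul_smul, ht]

theorem opK_mul_opF (ht : t ≠ 0) : opK t * opF = t⁻¹ • (opF * opK t) := end_ext fun a b => by
  simp only [Module.End.mul_apply, LinearMap.smul_apply, opF_e, opK_e, map_smul, smul_smul]
  rw [← zpow_neg_one, ← zpow_add₀ ht]
  congr 2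
  push_cast; ring

theorem opK_mul_opE (ht : t ≠ 0) : opK t * opE t f μ = t • (opE t f μ * opK t) := by
  refine end_ext fun a b => ?_
  simp only [Module.End.mul_apply, LinearMap.smul_apply, opE_e, opK_e, map_add, map_smul,
    map_sum, map_finsuppSum, smul_add, Finset.smul_sum, Finsupp.smul_sum, smul_smul]
  congr 1
  · rw [neg_add, zpow_add₀ ht, zpow_neg_one]
    field_simp
  · refine Finset.sum_congr rfl fun j hj => Finsupp.sum_congr fun i _ => ?_
    have ha : ((a - 1 : ℕ) : ℤ) = a - 1 := by simp at hj; omega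
    rw [ha, neg_sub, sub_eq_neg_add, zpow_add₀ ht, zpow_one, add_right_comm]
    congr 1
    ring

theorem opE_mul_opF_sub_opF_mul_opE (ht : t ≠ 0) :
    opE t f μ * opF - opF * opE t f μ = f.sum fun i c => c • lpow (opK t) (opKinv t) i := by
  refine end_ext fun a b => ?_
  have hF : opF (∑ j ∈ Finset.range a, f.sum fun i c => (c * t ^ (-(i * j))) • e (a - 1) (b + i))
      = ∑ j ∈ Finset.range a, f.sum fun i c => (c * t ^ (-(i * j))) • e a (b + i) := by
    refine (map_sum _ _ _).trans (Finset.sum_congr rfl fun j hj => ?_)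
    have : a - 1 + 1 = a := Nat.sub_add_cancel (by simp at hj; omega)
    simp [map_finsuppSum, this]
  simp only [LinearMap.sub_apply, Module.End.mul_apply, opF_e, opE_e, map_add, map_smul, hF,
    Finset.sum_range_succ, Nat.add_sub_cancel, add_sub_add_left_eq_sub, add_sub_cancel_left]
  simp only [Finsupp.sum, LinearMap.sum_apply, LinearMap.smul_apply, lpow_opK_opKinv_e ht,
    smul_smul]
  refine Finset.sum_congr rfl fun i _ => ?_
  ring_nf

end Operators

def generatorAction (q : ℂ) (f : ℤ →₀ ℂ) (μ : ℂ) : UqGen → Module.End ℂ V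
  | .E => opE (q ^ 2) f μ
  | .F => opF
  | .K => opK (q ^ 2)
  | .Kinv => opKinv (q ^ 2)

def rep (hq : q ≠ 0) (μ : ℂ) : Uqf q f →ₐ[ℂ] Module.End ℂ V :=
  RingQuot.liftAlgHom ℂ ⟨FreeAlgebra.lift ℂ (generatorAction q f μ), fun x y h => by
    have ht : q ^ 2 ≠ 0 := pow_ne_zero 2 hq
    cases h <;> simp only [map_mul, map_smul, map_sub, map_one, map_finsuppSum, map_lpow,
      FreeAlgebra.lift_ι_apply, generatorAction]
    exacts [opK_mul_opE ht, opK_mul_opF ht, opK_mul_opKinv ht, opKinv_mul_opK ht,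
      opE_mul_opF_sub_opF_mul_opE ht]⟩

section Representation

variable (hq : q ≠ 0) (μ : ℂ)

theorem rep_mkAlgHom_ι (g : UqGen) :
    rep hq μ (RingQuot.mkAlgHom ℂ (UqfRel q f) (FreeAlgebra.ι ℂ g)) = generatorAction q f μ g := by
  rw [rep, RingQuot.liftAlgHom_mkAlgHom_apply, FreeAlgebra.lift_ι_apply]

theorem rep_E_e : rep hq μ (Eg q f) (e 0 0) = μ • e 0 0 := by
  simp [Eg, rep_mkAlgHom_ι, generatorAction, opE_e]

theorem rep_mon_e (p : ℕ × ℤ) : rep hq μ (mon q f p) (e 0 0) = e p.1 p.2 := by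
  rw [mon, ← lpow_K_Kinv, map_mul, map_pow, map_lpow]
  simp only [Fg, Kg, Kinvg, rep_mkAlgHom_ι, generatorAction, Module.End.mul_apply,
    lpow_opK_opKinv_e (pow_ne_zero 2 hq)]
  simp [opF_pow_e]

theorem rep_linearCombination_mon_e (c : ℕ × ℤ →₀ ℂ) :
    rep hq μ (linearCombination ℂ (mon q f) c) (e 0 0) = c := by
  induction c using Finsupp.induction_linear with
  | zero => simp
  | add c d hc hd => simp [hc, hd]
  | single p a =>
    rw [linearCombination_single, map_smul, LinearMap.smul_apply, rep_mon_e]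
    simp [e]

end Representation

theorem disjoint_negBorel_spanMulKer (hq : q ≠ 0) (η : Algebra.adjoin ℂ {Eg q f} →ₐ[ℂ] ℂ) :
    Disjoint (Subalgebra.toSubmodule (negBorel q f)) (spanMulKer η) := by
  rw [Submodule.disjoint_def]
  intro x hxB hxJ
  set μ := η ⟨Eg q f, Algebra.self_mem_adjoin_singleton ℂ _⟩
  obtain ⟨c, rfl⟩ : x ∈ LinearMap.range (linearCombination ℂ (mon q f)) := by
    rw [range_linearCombination]
    exact negBorel_le_span_mon hq hxB
  have hc : rep hq μ (linearCombination ℂ (mon q f) c) (e 0 0) = 0 :=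
    apply_eq_zero_of_mem_spanMulKer _
      (apply_eq_smul_of_mem_adjoin_singleton _ η (rep_E_e hq μ)) hxJ
  rw [rep_linearCombination_mon_e] at hc
  simp [hc]

theorem codisjoint_negBorel_spanMulKer (hq : q ≠ 0) (η : Algebra.adjoin ℂ {Eg q f} →ₐ[ℂ] ℂ) :
    Codisjoint (Subalgebra.toSubmodule (negBorel q f)) (spanMulKer η) := by
  set E : Algebra.adjoin ℂ {Eg q f} := ⟨Eg q f, Algebra.self_mem_adjoin_singleton ℂ _⟩
  set μ := η E
  set W := Subalgebra.toSubmodule (negBorel q f) ⊔ spanMulKer η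
  have hB {b : Uqf q f} (hb : b ∈ negBorel q f) : b ∈ W := Submodule.mem_sup_left hb
  have hJ {z : Uqf q f} (hz : z ∈ spanMulKer η) : z ∈ W := Submodule.mem_sup_right hz
  have hEμ : η (E - algebraMap ℂ _ μ) = 0 := by
    rw [map_sub η, AlgHom.commutes, Algebra.algebraMap_self, RingHom.id_apply, sub_self]
  have hE_mon (p : ℕ × ℤ) : Eg q f * mon q f p ∈ W := by
    set c := (q ^ 2) ^ (-p.2)
    have hker : mon q f p * (Eg q f - μ • 1) ∈ spanMulKer η := Submodule.subset_span
      ⟨mon q f p, E - algebraMap ℂ _ μ, hEμ, by simp [E, Algebra.smul_def]⟩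
    have : Eg q f * mon q f p = (Eg q f * mon q f p - c • (mon q f p * Eg q f))
        + c • (mon q f p * (Eg q f - μ • 1)) + (c * μ) • mon q f p := by
      rw [mul_sub, mul_smul_comm, mul_one, smul_sub, smul_smul]; abel
    rw [this]
    exact add_mem (add_mem (hB (E_mul_mon_sub_mem hq p)) (W.smul_mem _ (hJ hker)))
      (W.smul_mem _ (hB (mon_mem_negBorel p)))
  have hgen : ∀ y ∈ Set.range fun g => RingQuot.mkAlgHom ℂ (UqfRel q f) (FreeAlgebra.ι ℂ g),
      ∀ w ∈ W, y * w ∈ W := by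
    rintro _ ⟨g, rfl⟩ w hw
    obtain ⟨b, hb, z, hz, rfl⟩ := Submodule.mem_sup.mp hw
    rw [mul_add]
    refine add_mem ?_ (hJ (mul_mem_spanMulKer _ hz))
    cases g
    · exact mul_mem_of_mem_span (by rintro _ ⟨p, rfl⟩; exact hE_mon p)
        (negBorel_le_span_mon hq hb)
    all_goals exact hB (mul_mem (Algebra.subset_adjoin (by simp [Fg, Kg, Kinvg])) hb)
  rw [codisjoint_iff, eq_top_iff]
  intro x _
  simpa using mul_mem_of_mem_adjoin hgen (adjoin_range_mkAlgHom_ι q f ▸ Algebra.mem_top)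
    (hB (one_mem _))

end Uqf

theorem stmt9_general (q : ℂ) (f : ℤ →₀ ℂ) (hq0 : q ≠ 0)
    (η : ↥(Algebra.adjoin ℂ ({Eg q f} : Set (Uqf q f))) →ₐ[ℂ] ℂ) :
    IsCompl
      (Subalgebra.toSubmodule (Algebra.adjoin ℂ ({Fg q f, Kg q f, Kinvg q f} : Set (Uqf q f))))
      (Submodule.span ℂ {z : Uqf q f |
        ∃ (u : Uqf q f) (x : ↥(Algebra.adjoin ℂ ({Eg q f} : Set (Uqf q f)))),
          η x = 0 ∧ z = u * (x : Uqf q f)}) :=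
  ⟨Uqf.disjoint_negBorel_spanMulKer hq0 η, Uqf.codisjoint_negBorel_spanMulKer hq0 η⟩

/-- Let `η : U_q(E) → ℂ` be an algebra homomorphism with `η(E) ≠ 0`, and
`U_{q,η}(E) = ker η`. Then `U_q(f(K)) = U_q(F, K^{±1}) ⊕ U_q(f(K))·U_{q,η}(E)` as a
direct sum of vector spaces. Here `U_q(E) = Algebra.adjoin ℂ {E}` and
`U_q(F, K^{±1}) = Algebra.adjoin ℂ {F, K, K⁻¹}`. -/
theorem stmt9 (q : ℂ) (f : ℤ →₀ ℂ) (hq0 : q ≠ 0) (hq2 : q ^ 2 ≠ 1)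
    (η : ↥(Algebra.adjoin ℂ ({Eg q f} : Set (Uqf q f))) →ₐ[ℂ] ℂ)
    (hη : η ⟨Eg q f, Algebra.subset_adjoin (Set.mem_singleton _)⟩ ≠ 0) :
    IsCompl
      (Subalgebra.toSubmodule (Algebra.adjoin ℂ ({Fg q f, Kg q f, Kinvg q f} : Set (Uqf q f))))
      (Submodule.span ℂ {z : Uqf q f |
        ∃ (u : Uqf q f) (x : ↥(Algebra.adjoin ℂ ({Eg q f} : Set (Uqf q f)))),
          η x = 0 ∧ z = u * (x : Uqf q f)}) :=
  stmt9_general q f hq0 η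
end
end

section
/- With Ω the Casimir element of U_q(f_m(K)), the projection satisfies π(Ω) = η(E)·F + (q^{2m}K^m + K^{−m})/((q^{2m} − 1)(q − q^{−1})). -/
noncomputable section

open FreeAlgebra in
inductive UqRel (q : ℂ) (m : ℕ) : FreeAlgebra ℂ UqGen → FreeAlgebra ℂ UqGen → Prop
  | KE : UqRel q m (ι ℂ UqGen.K * ι ℂ UqGen.E) (q ^ 2 • (ι ℂ UqGen.E * ι ℂ UqGen.K))
  | KF : UqRel q m (ι ℂ UqGen.K * ι ℂ UqGen.F) ((q ^ 2)⁻¹ • (ι ℂ UqGen.F * ι ℂ UqGen.K))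
  | KKinv : UqRel q m (ι ℂ UqGen.K * ι ℂ UqGen.Kinv) 1
  | KinvK : UqRel q m (ι ℂ UqGen.Kinv * ι ℂ UqGen.K) 1
  | EF : UqRel q m (ι ℂ UqGen.E * ι ℂ UqGen.F - ι ℂ UqGen.F * ι ℂ UqGen.E)
      ((q - q⁻¹)⁻¹ • ((ι ℂ UqGen.K) ^ m - (ι ℂ UqGen.Kinv) ^ m))

abbrev Uq (q : ℂ) (m : ℕ) : Type := RingQuot (UqRel q m)

def Egen (q : ℂ) (m : ℕ) : Uq q m := RingQuot.mkAlgHom ℂ (UqRel q m) (FreeAlgebra.ι ℂ UqGen.E)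
def Fgen (q : ℂ) (m : ℕ) : Uq q m := RingQuot.mkAlgHom ℂ (UqRel q m) (FreeAlgebra.ι ℂ UqGen.F)
def Kgen (q : ℂ) (m : ℕ) : Uq q m := RingQuot.mkAlgHom ℂ (UqRel q m) (FreeAlgebra.ι ℂ UqGen.K)
def Kinvgen (q : ℂ) (m : ℕ) : Uq q m := RingQuot.mkAlgHom ℂ (UqRel q m) (FreeAlgebra.ι ℂ UqGen.Kinv)

def Kzpow (q : ℂ) (m : ℕ) (n : ℤ) : Uq q m := lpow (Kgen q m) (Kinvgen q m) n

def Casimir (q : ℂ) (m : ℕ) : Uq q m :=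
  Fgen q m * Egen q m +
    (((q ^ (2 * m) - 1) * (q - q⁻¹))⁻¹ * q ^ (2 * m)) • Kgen q m ^ m +
    ((q ^ (2 * m) - 1) * (q - q⁻¹))⁻¹ • Kinvgen q m ^ m


/-!
Realise the induced module `U_q(f_m(K)) ⊗_{ℂ[E]} ℂ_η` concretely: on the space with basis
`v (a, b)` (standing for `F^a K^b ⊗ 1`) the generators act by explicit formulas, and `v (0, 0)` is a
Whittaker vector, `E v = η(E) v`. The orbit map `u ↦ u · v (0, 0)` kills the left ideal generated by
`ker η` and sends the monomials `F^a K^b` to the basis, so `U_q(F, K^{±1})` meets that left ideal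
trivially. Since `Ω - (η(E) F + …) = F (E - η(E))` lies in the left ideal, so does
`π(Ω) - (η(E) F + …)`, an element of `U_q(F, K^{±1})`; hence it vanishes.
-/

theorem Units.val_zpow_mul_eq_smul {R A : Type*} [Field R] [Ring A] [Algebra R A] {u : Aˣ}
    {x : A} {s : R} (hs : s ≠ 0) (h : ↑u * x = s • (x * ↑u)) (n : ℤ) :
    ↑(u ^ n) * x = s ^ n • (x * ↑(u ^ n)) := by
  have h_inv : ↑u⁻¹ * x = s⁻¹ • (x * ↑u⁻¹) := by
    calc ↑u⁻¹ * x = s⁻¹ • (↑u⁻¹ * (s • (x * ↑u)) * ↑u⁻¹) := by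
          rw [mul_smul_comm, smul_mul_assoc, smul_smul, inv_mul_cancel₀ hs, one_smul]
          simp [mul_assoc]
      _ = s⁻¹ • (x * ↑u⁻¹) := by rw [← h, ← mul_assoc, Units.inv_mul, one_mul]
  induction n using Int.induction_on with
  | zero => simp
  | succ n ih =>
    rw [zpow_add_one, Units.val_mul, mul_assoc, h, mul_smul_comm, ← mul_assoc, ih,
      smul_mul_assoc, smul_smul, mul_assoc, zpow_add_one₀ hs, mul_comm (s ^ (n : ℤ))]
  | pred n ih =>
    rw [zpow_sub_one, Units.val_mul, mul_assoc, h_inv, mul_smul_comm, ← mul_assoc, ih,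
      smul_mul_assoc, smul_smul, mul_assoc, zpow_sub_one₀ hs, mul_comm (s ^ (-(n : ℤ)))]

section Generators

variable (q : ℂ) (m : ℕ)

theorem Kgen_mul_Kinvgen : Kgen q m * Kinvgen q m = 1 := by
  simpa [Kgen, Kinvgen] using RingQuot.mkAlgHom_rel ℂ (UqRel.KKinv (q := q) (m := m))

theorem Kinvgen_mul_Kgen : Kinvgen q m * Kgen q m = 1 := by
  simpa [Kgen, Kinvgen] using RingQuot.mkAlgHom_rel ℂ (UqRel.KinvK (q := q) (m := m))

theorem Kgen_mul_Fgen : Kgen q m * Fgen q m = (q ^ 2)⁻¹ • (Fgen q m * Kgen q m) := by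
  simpa [Kgen, Fgen] using RingQuot.mkAlgHom_rel ℂ (UqRel.KF (q := q) (m := m))

def Kunit : (Uq q m)ˣ := ⟨Kgen q m, Kinvgen q m, Kgen_mul_Kinvgen q m, Kinvgen_mul_Kgen q m⟩

def monomial (p : ℕ × ℤ) : Uq q m := Fgen q m ^ p.1 * ↑(Kunit q m ^ p.2)

variable {q}

theorem Kunit_zpow_mul_Fgen_pow (hq0 : q ≠ 0) (n : ℤ) (a : ℕ) :
    ↑(Kunit q m ^ n) * Fgen q m ^ a =
      ((q ^ 2)⁻¹ ^ n) ^ a • (Fgen q m ^ a * ↑(Kunit q m ^ n)) := by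
  have h := Units.val_zpow_mul_eq_smul (u := Kunit q m) (inv_ne_zero (pow_ne_zero 2 hq0))
    (Kgen_mul_Fgen q m) n
  rw [← smul_mul_assoc] at h
  rw [SemiconjBy.pow_right h a, smul_pow, smul_mul_assoc]

theorem monomial_mul (hq0 : q ≠ 0) (p p' : ℕ × ℤ) :
    monomial q m p * monomial q m p' = ((q ^ 2)⁻¹ ^ p.2) ^ p'.1 • monomial q m (p + p') := by
  calc monomial q m p * monomial q m p'
      = Fgen q m ^ p.1 * (↑(Kunit q m ^ p.2) * Fgen q m ^ p'.1) * ↑(Kunit q m ^ p'.2) := by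
        simp only [monomial, mul_assoc]
    _ = ((q ^ 2)⁻¹ ^ p.2) ^ p'.1 • monomial q m (p + p') := by
        rw [Kunit_zpow_mul_Fgen_pow m hq0, mul_smul_comm, smul_mul_assoc, monomial, Prod.fst_add,
          Prod.snd_add, pow_add, zpow_add, Units.val_mul]
        noncomm_ring

end Generators

section MonomialSpan

variable {q : ℂ} (m : ℕ)

theorem monomial_zero : monomial q m 0 = 1 := by simp [monomial]

theorem span_monomial_mul_le (hq0 : q ≠ 0) :
    Submodule.span ℂ (Set.range (monomial q m)) *
        Submodule.span ℂ (Set.range (monomial q m)) ≤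
      Submodule.span ℂ (Set.range (monomial q m)) := by
  rw [Submodule.span_mul_span, Submodule.span_le]
  rintro _ ⟨_, ⟨p, rfl⟩, _, ⟨p', rfl⟩, rfl⟩
  simp only [SetLike.mem_coe, monomial_mul m hq0]
  exact Submodule.smul_mem _ _ (Submodule.subset_span ⟨p + p', rfl⟩)

def monomialSpan (hq0 : q ≠ 0) : Subalgebra ℂ (Uq q m) :=
  (Submodule.span ℂ (Set.range (monomial q m))).toSubalgebra
    (Submodule.subset_span ⟨0, monomial_zero m⟩)
    fun _ _ hx hy => span_monomial_mul_le m hq0 (Submodule.mul_mem_mul hx hy)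

theorem adjoin_FK_le_monomialSpan (hq0 : q ≠ 0) :
    Algebra.adjoin ℂ {Fgen q m, Kgen q m, Kinvgen q m} ≤ monomialSpan m hq0 := by
  have h_mem (p : ℕ × ℤ) : monomial q m p ∈ monomialSpan m hq0 :=
    Submodule.subset_span ⟨p, rfl⟩
  rw [Algebra.adjoin_le_iff]
  rintro _ (rfl | rfl | rfl)
  · simpa [monomial] using h_mem (1, 0)
  · simpa [monomial, Kunit] using h_mem (0, 1)
  · simpa [monomial, Kunit] using h_mem (0, -1)

end MonomialSpan

def whittakerIdeal {q : ℂ} {m : ℕ} (η : Algebra.adjoin ℂ {Egen q m} →ₐ[ℂ] ℂ) :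
    Submodule ℂ (Uq q m) :=
  Submodule.span ℂ
    {z | ∃ (w : Uq q m) (x : Algebra.adjoin ℂ {Egen q m}), η x = 0 ∧ z = w * x}

namespace WhittakerModule

open Finsupp

section Representation

abbrev V : Type := (ℕ × ℤ) →₀ ℂ

def v (p : ℕ × ℤ) : V := single p 1

def geomSum (q : ℂ) (k : ℤ) (a : ℕ) : ℂ := ∑ j ∈ Finset.range a, q ^ (2 * k * j)

def Fop : Module.End ℂ V := linearCombination ℂ fun p => v (p.1 + 1, p.2)

def Kop (q : ℂ) (n : ℤ) : Module.End ℂ V :=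
  linearCombination ℂ fun p => q ^ (-(2 * p.1 * n)) • v (p.1, p.2 + n)

/- `v (a, b)` plays `F^a K^b v (0, 0)` with `E v (0, 0) = c v (0, 0)`. Then
`E F^a K^b = q^{-2b} F^a K^b E + [E, F^a] K^b`, and moving `K^{±m}` to the right in
`[E, F^a] = ∑ F^j [E, F] F^{a-1-j}` produces the geometric sums. At `a = 0` the index `p.1 - 1`
truncates to `0`, harmlessly since both sums are then empty. -/
def Eop (q c : ℂ) (m : ℕ) : Module.End ℂ V :=
  linearCombination ℂ fun p => (c * q ^ (-(2 * p.2))) • v p +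
    (q - q⁻¹)⁻¹ •
      (geomSum q (-m) p.1 • v (p.1 - 1, p.2 + m) - geomSum q m p.1 • v (p.1 - 1, p.2 - m))

variable {q : ℂ} (c : ℂ) (m : ℕ)

@[simp] theorem Fop_v (a : ℕ) (b : ℤ) : Fop (v (a, b)) = v (a + 1, b) := by
  simp [Fop, v]

@[simp] theorem Kop_v (n : ℤ) (a : ℕ) (b : ℤ) :
    Kop q n (v (a, b)) = q ^ (-(2 * a * n)) • v (a, b + n) := by
  simp [Kop, v]

theorem Eop_v (a : ℕ) (b : ℤ) :
    Eop q c m (v (a, b)) = (c * q ^ (-(2 * b))) • v (a, b) + (q - q⁻¹)⁻¹ •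
      (geomSum q (-m) a • v (a - 1, b + m) - geomSum q m a • v (a - 1, b - m)) := by
  simp [Eop, v]

theorem Eop_v_zero_left (b : ℤ) : Eop q c m (v (0, b)) = (c * q ^ (-(2 * b))) • v (0, b) := by
  simp [Eop_v, geomSum]

theorem Eop_v_succ_left (a : ℕ) (b : ℤ) :
    Eop q c m (v (a + 1, b)) = (c * q ^ (-(2 * b))) • v (a + 1, b) + (q - q⁻¹)⁻¹ •
      (geomSum q (-m) (a + 1) • v (a, b + m) - geomSum q m (a + 1) • v (a, b - m)) := by
  simp [Eop_v]

theorem Kop_mul_Kop (hq0 : q ≠ 0) (n n' : ℤ) : Kop q n * Kop q n' = Kop q (n + n') := by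
  ext ⟨a, b⟩ : 2
  change Kop q n (Kop q n' (v (a, b))) = Kop q (n + n') (v (a, b))
  rw [Kop_v, map_smul, Kop_v, Kop_v, smul_smul, ← zpow_add₀ hq0, add_assoc]
  ring_nf

@[simp] theorem Kop_zero : Kop q 0 = 1 := by
  ext ⟨a, b⟩ : 2
  change Kop q 0 (v (a, b)) = v (a, b)
  simp

theorem Kop_pow (hq0 : q ≠ 0) (n : ℤ) (k : ℕ) : Kop q n ^ k = Kop q (k * n) := by
  induction k with
  | zero => simp
  | succ k ih => rw [pow_succ, ih, Kop_mul_Kop hq0, Nat.cast_succ, add_one_mul]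

theorem Kop_mul_Fop (hq0 : q ≠ 0) : Kop q 1 * Fop = (q ^ 2)⁻¹ • (Fop * Kop q 1) := by
  ext ⟨a, b⟩ : 2
  change Kop q 1 (Fop (v (a, b))) = (q ^ 2)⁻¹ • Fop (Kop q 1 (v (a, b)))
  simp only [Fop_v, Kop_v, map_smul, smul_smul]
  congr 1
  push_cast
  simp only [mul_add, neg_add, zpow_add₀ hq0, zpow_neg, mul_one, zpow_mul, zpow_natCast]
  field_simp

theorem geomSum_succ (q : ℂ) (k : ℤ) (a : ℕ) :
    geomSum q k (a + 1) = geomSum q k a + q ^ (2 * k * a) :=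
  Finset.sum_range_succ _ _

theorem Kop_mul_Eop (hq0 : q ≠ 0) : Kop q 1 * Eop q c m = q ^ 2 • (Eop q c m * Kop q 1) := by
  ext ⟨a, b⟩ : 2
  change Kop q 1 (Eop q c m (v (a, b))) = q ^ 2 • Eop q c m (Kop q 1 (v (a, b)))
  rcases a with _ | a
  · simp only [Eop_v_zero_left, Kop_v, map_smul, smul_smul]
    congr 1
    push_cast
    simp only [mul_add, neg_add, zpow_add₀ hq0, zpow_neg, mul_one, zpow_mul]
    field_simp
  · simp only [Eop_v_succ_left, Kop_v, map_smul, map_add, map_sub, smul_add, smul_sub, smul_smul,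
      add_right_comm _ (1 : ℤ), sub_add_eq_add_sub]
    match_scalars <;>
    · simp only [mul_add, neg_add, zpow_add₀ hq0, zpow_neg, mul_one, zpow_mul]
      field_simp

theorem Eop_mul_Fop_sub :
    Eop q c m * Fop - Fop * Eop q c m = (q - q⁻¹)⁻¹ • (Kop q m - Kop q (-m)) := by
  ext ⟨a, b⟩ : 2
  change Eop q c m (Fop (v (a, b))) - Fop (Eop q c m (v (a, b))) =
    (q - q⁻¹)⁻¹ • (Kop q m (v (a, b)) - Kop q (-m) (v (a, b)))
  rcases a with _ | a
  · simp [Eop_v_succ_left, Eop_v_zero_left, geomSum, ← sub_eq_add_neg]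
  · simp only [Fop_v, Eop_v_succ_left, Kop_v, map_smul, map_add, map_sub, smul_sub, smul_smul,
      geomSum_succ, ← sub_eq_add_neg]
    match_scalars <;> ring_nf

def genAction (q c : ℂ) (m : ℕ) : UqGen → Module.End ℂ V
  | UqGen.E => Eop q c m
  | UqGen.F => Fop
  | UqGen.K => Kop q 1
  | UqGen.Kinv => Kop q (-1)

def rep (hq0 : q ≠ 0) : Uq q m →ₐ[ℂ] Module.End ℂ V :=
  RingQuot.liftAlgHom ℂ ⟨FreeAlgebra.lift ℂ (genAction q c m), by
    intro x y h
    cases h <;>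
      simp only [map_mul, map_smul, map_sub, map_pow, map_one, FreeAlgebra.lift_ι_apply, genAction]
    · exact Kop_mul_Eop c m hq0
    · exact Kop_mul_Fop hq0
    · simp [Kop_mul_Kop hq0]
    · simp [Kop_mul_Kop hq0]
    · rw [Kop_pow hq0, Kop_pow hq0, mul_one, mul_neg_one, Eop_mul_Fop_sub]⟩

variable (hq0 : q ≠ 0)

@[simp] theorem rep_Egen : rep c m hq0 (Egen q m) = Eop q c m := by
  simp [rep, Egen, genAction]

@[simp] theorem rep_Fgen : rep c m hq0 (Fgen q m) = Fop := by
  simp [rep, Fgen, genAction]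

@[simp] theorem rep_Kgen : rep c m hq0 (Kgen q m) = Kop q 1 := by
  simp [rep, Kgen, genAction]

@[simp] theorem rep_Kinvgen : rep c m hq0 (Kinvgen q m) = Kop q (-1) := by
  simp [rep, Kinvgen, genAction]

theorem rep_Kunit_zpow (n : ℤ) : rep c m hq0 ↑(Kunit q m ^ n) = Kop q n := by
  induction n using Int.induction_on with
  | zero => simp
  | succ n ih => rw [zpow_add_one, Units.val_mul, map_mul, ih, Kunit, rep_Kgen, Kop_mul_Kop hq0]
  | pred n ih =>
    rw [zpow_sub_one, Units.val_mul, map_mul, ih, Kunit, Units.inv_mk, rep_Kinvgen,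
      Kop_mul_Kop hq0, sub_eq_add_neg]

theorem Fop_pow_v (k a : ℕ) (b : ℤ) : (Fop ^ k) (v (a, b)) = v (a + k, b) := by
  induction k with
  | zero => simp
  | succ k ih => rw [pow_succ', Module.End.mul_apply, ih, Fop_v, add_assoc]

theorem rep_monomial_v_zero (p : ℕ × ℤ) : rep c m hq0 (monomial q m p) (v (0, 0)) = v p := by
  rw [monomial, map_mul, map_pow, rep_Fgen, rep_Kunit_zpow, Module.End.mul_apply, Kop_v, map_smul,
    Fop_pow_v]
  simp

end Representation

section Orbit

variable {q : ℂ} {m : ℕ} (hq0 : q ≠ 0) (η : Algebra.adjoin ℂ {Egen q m} →ₐ[ℂ] ℂ)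

theorem rep_apply_v_zero_of_mem_adjoin_Egen (x : Algebra.adjoin ℂ {Egen q m}) :
    rep (η ⟨Egen q m, Algebra.self_mem_adjoin_singleton ℂ _⟩) m hq0 x (v (0, 0)) =
      η x • v (0, 0) := by
  set e : Algebra.adjoin ℂ {Egen q m} := ⟨Egen q m, Algebra.self_mem_adjoin_singleton ℂ _⟩
  obtain ⟨p, hp⟩ : ∃ p : Polynomial ℂ, Polynomial.aeval (Egen q m) p = x := by
    simpa [Algebra.adjoin_singleton_eq_range_aeval] using x.2
  have hx : x = Polynomial.aeval e p :=
    Subtype.ext (by rw [Polynomial.aeval_subalgebra_coe, ← hp])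
  have h_eigen : (Eop q (η e) m).HasEigenvector (η e) (v (0, 0)) := by
    refine Module.End.hasEigenvector_iff.mpr ⟨?_, ?_⟩
    · rw [Module.End.mem_eigenspace_iff, Eop_v_zero_left]
      simp
    · simp [v]
  rw [← hp, ← Polynomial.aeval_algHom_apply, rep_Egen,
    Module.End.aeval_apply_of_hasEigenvector h_eigen, hx, ← Polynomial.aeval_algHom_apply,
    Polynomial.coe_aeval_eq_eval]

def orbitMap (c : ℂ) (m : ℕ) (hq0 : q ≠ 0) : Uq q m →ₗ[ℂ] V :=
  LinearMap.applyₗ (v (0, 0)) ∘ₗ (rep c m hq0).toLinearMap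

theorem whittakerIdeal_le_ker_orbitMap :
    whittakerIdeal η ≤ LinearMap.ker
      (orbitMap (η ⟨Egen q m, Algebra.self_mem_adjoin_singleton ℂ _⟩) m hq0) := by
  rw [whittakerIdeal, Submodule.span_le]
  rintro _ ⟨w, x, hx, rfl⟩
  simp [orbitMap, rep_apply_v_zero_of_mem_adjoin_Egen, hx]

def toUq (q : ℂ) (m : ℕ) : V →ₗ[ℂ] Uq q m := Finsupp.linearCombination ℂ (monomial q m)

theorem toUq_orbitMap (c : ℂ) {u : Uq q m} (hu : u ∈ monomialSpan m hq0) :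
    toUq q m (orbitMap c m hq0 u) = u := by
  refine LinearMap.eqOn_span' (f := toUq q m ∘ₗ orbitMap c m hq0) (g := LinearMap.id) ?_ hu
  rintro _ ⟨p, rfl⟩
  change toUq q m (rep c m hq0 (monomial q m p) (v (0, 0))) = monomial q m p
  rw [rep_monomial_v_zero, toUq, v, Finsupp.linearCombination_single, one_smul]

end Orbit

end WhittakerModule

open WhittakerModule in
theorem eq_of_sub_mem_whittakerIdeal {q : ℂ} {m : ℕ} (hq0 : q ≠ 0)
    (η : Algebra.adjoin ℂ {Egen q m} →ₐ[ℂ] ℂ) {x y : Uq q m}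
    (hx : x ∈ Algebra.adjoin ℂ {Fgen q m, Kgen q m, Kinvgen q m})
    (hy : y ∈ Algebra.adjoin ℂ {Fgen q m, Kgen q m, Kinvgen q m})
    (h : x - y ∈ whittakerIdeal η) : x = y := by
  set c := η ⟨Egen q m, Algebra.self_mem_adjoin_singleton ℂ _⟩
  have h_orbit : orbitMap c m hq0 x = orbitMap c m hq0 y :=
    sub_eq_zero.mp (by simpa using whittakerIdeal_le_ker_orbitMap hq0 η h)
  calc x = toUq q m (orbitMap c m hq0 x) :=
        (toUq_orbitMap hq0 c (adjoin_FK_le_monomialSpan m hq0 hx)).symm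
    _ = y := by rw [h_orbit, toUq_orbitMap hq0 c (adjoin_FK_le_monomialSpan m hq0 hy)]

theorem Casimir_sub_mem_whittakerIdeal {q : ℂ} {m : ℕ}
    (η : Algebra.adjoin ℂ {Egen q m} →ₐ[ℂ] ℂ) :
    Casimir q m - (η ⟨Egen q m, Algebra.self_mem_adjoin_singleton ℂ _⟩ • Fgen q m +
      (((q ^ (2 * m) - 1) * (q - q⁻¹))⁻¹ * q ^ (2 * m)) • Kgen q m ^ m +
      ((q ^ (2 * m) - 1) * (q - q⁻¹))⁻¹ • Kinvgen q m ^ m) ∈ whittakerIdeal η := by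
  set e : Algebra.adjoin ℂ {Egen q m} := ⟨Egen q m, Algebra.self_mem_adjoin_singleton ℂ _⟩
  refine Submodule.subset_span ⟨Fgen q m, e - algebraMap ℂ _ (η e), ?_, ?_⟩
  · rw [map_sub η e, AlgHom.commutes, Algebra.algebraMap_self_apply, sub_self]
  · simp [e, Casimir, mul_sub, Algebra.algebraMap_eq_smul_one]

theorem stmt11_general (q : ℂ) (m : ℕ) (hq0 : q ≠ 0)
    (η : ↥(Algebra.adjoin ℂ ({Egen q m} : Set (Uq q m))) →ₐ[ℂ] ℂ)
    (π : Uq q m →ₗ[ℂ] Uq q m)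
    (hπ1 : ∀ u : Uq q m,
      π u ∈ Algebra.adjoin ℂ ({Fgen q m, Kgen q m, Kinvgen q m} : Set (Uq q m)))
    (hπ2 : ∀ u : Uq q m,
      u - π u ∈ Submodule.span ℂ {z : Uq q m |
        ∃ (w : Uq q m) (x : ↥(Algebra.adjoin ℂ ({Egen q m} : Set (Uq q m)))),
          η x = 0 ∧ z = w * (x : Uq q m)}) :
    π (Casimir q m) =
      η ⟨Egen q m, Algebra.subset_adjoin (Set.mem_singleton _)⟩ • Fgen q m +
        (((q ^ (2 * m) - 1) * (q - q⁻¹))⁻¹ * q ^ (2 * m)) • Kgen q m ^ m +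
        ((q ^ (2 * m) - 1) * (q - q⁻¹))⁻¹ • Kinvgen q m ^ m := by
  have h_gen {x : Uq q m} (hx : x ∈ ({Fgen q m, Kgen q m, Kinvgen q m} : Set (Uq q m))) :
      x ∈ Algebra.adjoin ℂ {Fgen q m, Kgen q m, Kinvgen q m} :=
    Algebra.subset_adjoin hx
  refine eq_of_sub_mem_whittakerIdeal hq0 η (hπ1 _) ?_ ?_
  · exact add_mem (add_mem (Subalgebra.smul_mem _ (h_gen (by simp)) _)
      (Subalgebra.smul_mem _ (pow_mem (h_gen (by simp)) m) _))
      (Subalgebra.smul_mem _ (pow_mem (h_gen (by simp)) m) _)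
  · simpa using sub_mem (Casimir_sub_mem_whittakerIdeal η) (hπ2 (Casimir q m))

/-- With `Ω` the Casimir element of `U_q(f_m(K))` and `π` the projection
onto `U_q(F, K^{±1})` along `U_q(f_m(K))·ker η`, one has
`π(Ω) = η(E)·F + (q^{2m}K^m + K^{-m})/((q^{2m} - 1)(q - q⁻¹))`. -/
theorem stmt11 (q : ℂ) (m : ℕ) (hm : 1 ≤ m) (hq0 : q ≠ 0)
    (hq : ∀ k : ℕ, 0 < k → q ^ k ≠ 1)
    (η : ↥(Algebra.adjoin ℂ ({Egen q m} : Set (Uq q m))) →ₐ[ℂ] ℂ)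
    (hη : η ⟨Egen q m, Algebra.subset_adjoin (Set.mem_singleton _)⟩ ≠ 0)
    (π : Uq q m →ₗ[ℂ] Uq q m)
    (hπ1 : ∀ u : Uq q m,
      π u ∈ Algebra.adjoin ℂ ({Fgen q m, Kgen q m, Kinvgen q m} : Set (Uq q m)))
    (hπ2 : ∀ u : Uq q m,
      u - π u ∈ Submodule.span ℂ {z : Uq q m |
        ∃ (w : Uq q m) (x : ↥(Algebra.adjoin ℂ ({Egen q m} : Set (Uq q m)))),
          η x = 0 ∧ z = w * (x : Uq q m)}) :
    π (Casimir q m) =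
      η ⟨Egen q m, Algebra.subset_adjoin (Set.mem_singleton _)⟩ • Fgen q m +
        (((q ^ (2 * m) - 1) * (q - q⁻¹))⁻¹ * q ^ (2 * m)) • Kgen q m ^ m +
        ((q ^ (2 * m) - 1) * (q - q⁻¹))⁻¹ • Kinvgen q m ^ m :=
  stmt11_general q m hq0 η π hπ1 hπ2
end
end

section
/- Let V be a Whittaker module for U_q(f_m(K)) admitting a central character (i.e., Z_V is a maximal ideal of C[Ω]). Then V is irreducible, and conversely every irreducible Whittaker module admits a central character; moreover in this case the space of Whittaker vectors of V is one-dimensional. -/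
/-!
The Casimir `Ω` is central, and for a Whittaker vector `w` the vectors `K ^ n w` (`n : ℤ`) are
eigenvectors of `E` with the pairwise distinct eigenvalues `q ^ (-2n) e`.

If `Ω` acts by a scalar `χ`, then `e F w = F E w = χ w - (a K ^ m + b K⁻¹ ^ m) w`, so the span
of the `K ^ n w` is stable under `F` and is all of `V`. A Vandermonde argument (apply
`E - q ^ (-2j) e` to kill components one at a time) shows that every nonzero submodule contains
some `K ^ n w`, hence `w`, so `V` is simple; comparing `E`-eigenvalues shows that every Whittaker
vector is a multiple of `w`.

Conversely, `V` is a quotient of a free algebra on four generators, so it has countable dimension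
over `ℂ`. Dixmier's argument then applies to the central element `Ω` of the simple module `V`:
the endomorphism it induces lies in the centre of the division ring `End V`, which is a field of
countable dimension over `ℂ`; a transcendental element `x` there would give the uncountable
linearly independent family `(x - c)⁻¹`. So `Ω` acts by a scalar.
-/

noncomputable section

open Cardinal

universe u

open IntermediateField in
theorem IsAlgClosed.mem_range_algebraMap_of_isAlgebraic {k E : Type*} [Field k] [IsAlgClosed k]
    [Field E] [Algebra k E] {x : E} (hx : IsAlgebraic k x) : x ∈ Set.range (algebraMap k E) := by
  have : FiniteDimensional k k⟮x⟯ := adjoin.finiteDimensional hx.isIntegral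
  have hbot := eq_bot_of_isAlgClosed_of_isAlgebraic k⟮x⟯
  exact mem_bot.1 (hbot ▸ mem_adjoin_simple_self k x)

theorem IsAlgClosed.algebraMap_surjective_of_rank_lt_card {k E : Type u} [Field k] [IsAlgClosed k]
    [Field E] [Algebra k E] (h : Module.rank k E < #k) : Function.Surjective (algebraMap k E) := by
  intro x
  by_contra hx
  have hx : Transcendental k x := fun halg => hx (mem_range_algebraMap_of_isAlgebraic halg)
  exact h.not_ge hx.linearIndependent_sub_inv.cardinal_le_rank

theorem DivisionRing.exists_algebraMap_eq_of_mem_center {k D : Type u} [Field k] [IsAlgClosed k]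
    [DivisionRing D] [Algebra k D] (h : Module.rank k D < #k) {x : D}
    (hx : x ∈ Subring.center D) : ∃ c : k, algebraMap k D c = x := by
  let Z := Subring.center D
  let : Algebra k Z := RingHom.toAlgebra <| (algebraMap k D).codRestrict Z fun c =>
    Subring.mem_center_iff.2 fun y => (Algebra.commutes c y).symm
  let incl : Z →ₗ[k] D :=
    { toFun := Subtype.val
      map_add' := fun _ _ => rfl
      map_smul' := fun c z => (Algebra.smul_def c (z : D)).symm }
  have hZ : Module.rank k Z < #k :=
    (incl.rank_le_of_injective Subtype.val_injective).trans_lt h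
  obtain ⟨c, hc⟩ := IsAlgClosed.algebraMap_surjective_of_rank_lt_card hZ ⟨x, hx⟩
  exact ⟨c, congrArg Subtype.val hc⟩

theorem IsSimpleModule.exists_forall_smul_eq_of_commute (k : Type u) {A V : Type u} [Field k]
    [IsAlgClosed k] [Ring A] [Algebra k A] [AddCommGroup V] [Module k V] [Module A V]
    [IsScalarTower k A V] [IsSimpleModule A V] (h : Module.rank k V < #k) {z : A}
    (hz : ∀ a : A, Commute z a) : ∃ c : k, ∀ v : V, z • v = c • v := by
  classical
  have := IsSimpleModule.nontrivial A V
  obtain ⟨v₀, hv₀⟩ := exists_ne (0 : V)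
  let ev : Module.End A V →ₗ[k] V :=
    { toFun := fun φ => φ v₀
      map_add' := fun _ _ => rfl
      map_smul' := fun _ _ => rfl }
  have hev : Function.Injective ev := by
    refine (injective_iff_map_eq_zero ev).2 fun φ hφ => ?_
    by_contra hne
    exact hv₀ (LinearMap.injective_of_ne_zero hne (hφ.trans φ.map_zero.symm))
  let ω : Module.End A V :=
    { toFun := fun v => z • v
      map_add' := smul_add z
      map_smul' := fun a v => by simp only [← mul_smul, (hz a).eq, RingHom.id_apply] }
  have hω : ω ∈ Subring.center (Module.End A V) :=
    Subring.mem_center_iff.2 fun φ => LinearMap.ext fun v => φ.map_smul z v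
  obtain ⟨c, hc⟩ := DivisionRing.exists_algebraMap_eq_of_mem_center
    ((ev.rank_le_of_injective hev).trans_lt h) hω
  exact ⟨c, fun v => (LinearMap.congr_fun hc v).symm⟩

section Eigenvectors

variable {K V ι : Type*} [Field K] [AddCommGroup V] [Module K V] {f : Module.End K V}
  {μ : ι → K} {b : ι → V}

theorem Module.End.apply_sum_smul_sub_smul (hb : ∀ i, f (b i) = μ i • b i) (s : Finset ι)
    (c : ι → K) (a : K) :
    f (∑ j ∈ s, c j • b j) - a • ∑ j ∈ s, c j • b j = ∑ j ∈ s, ((μ j - a) * c j) • b j := by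
  simp only [map_sum, map_smul, hb, Finset.smul_sum, ← Finset.sum_sub_distrib]
  refine Finset.sum_congr rfl fun j _ => ?_
  rw [smul_smul, smul_smul, ← sub_smul]
  congr 1
  ring

theorem Module.End.smul_mem_of_sum_smul_mem (hμ : Function.Injective μ)
    (hb : ∀ i, f (b i) = μ i • b i) {W : Submodule K V} (hW : ∀ x ∈ W, f x ∈ W)
    (s : Finset ι) (c : ι → K) (hs : ∑ j ∈ s, c j • b j ∈ W) : ∀ i ∈ s, c i • b i ∈ W := by
  classical
  induction s using Finset.induction_on generalizing c with
  | empty => simp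
  | insert a s ha ih =>
    have hrest : ∀ j ∈ s, c j • b j ∈ W := by
      intro j hj
      have hsub := W.sub_mem (hW _ hs) (W.smul_mem (μ a) hs)
      rw [apply_sum_smul_sub_smul hb, Finset.sum_insert ha, sub_self, zero_mul, zero_smul,
        zero_add] at hsub
      have hne : μ j - μ a ≠ 0 := sub_ne_zero.2 (hμ.ne (ne_of_mem_of_not_mem hj ha))
      simpa [smul_smul, ← mul_assoc, inv_mul_cancel₀ hne] using
        W.smul_mem (μ j - μ a)⁻¹ (ih _ hsub j hj)
    refine (Finset.forall_mem_insert _ _ _).2 ⟨?_, hrest⟩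
    simpa [Finset.sum_insert ha] using W.sub_mem hs (W.sum_mem hrest)

theorem Module.End.sum_smul_mem_span_singleton (hμ : Function.Injective μ)
    (hb : ∀ i, f (b i) = μ i • b i) (hb₀ : ∀ i, b i ≠ 0) (s : Finset ι) (c : ι → K) {i : ι}
    (hv : f (∑ j ∈ s, c j • b j) = μ i • ∑ j ∈ s, c j • b j) :
    ∑ j ∈ s, c j • b j ∈ K ∙ b i := by
  have hli : LinearIndependent K b :=
    eigenvectors_linearIndependent' f μ hμ b fun j => ⟨mem_eigenspace_iff.2 (hb j), hb₀ j⟩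
  have hzero : ∑ j ∈ s, ((μ j - μ i) * c j) • b j = 0 := by
    rw [← apply_sum_smul_sub_smul hb, hv, sub_self]
  refine Submodule.sum_mem _ fun j hj => ?_
  rcases eq_or_ne j i with rfl | hji
  · exact Submodule.smul_mem _ _ (Submodule.mem_span_singleton_self _)
  · have hc := linearIndependent_iff'.1 hli s _ hzero j hj
    rw [mul_eq_zero_iff_left (sub_ne_zero.2 (hμ.ne hji))] at hc
    rw [hc, zero_smul]
    exact Submodule.zero_mem _

end Eigenvectors

section TwistedCommutation

variable {R A : Type*} [Field R] [Semiring A] [Algebra R A] {s : R} {g : A}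

theorem pow_mul_eq_smul_mul_pow {x : A} (h : x * g = s • (g * x)) (n : ℕ) :
    x ^ n * g = s ^ n • (g * x ^ n) := by
  induction n with
  | zero => simp
  | succ n ih =>
    rw [pow_succ, mul_assoc, h, mul_smul_comm, ← mul_assoc, ih, smul_mul_assoc, smul_smul,
      mul_assoc, ← pow_succ, ← pow_succ']

theorem Units.inv_mul_eq_smul_mul_inv {u : Aˣ} (hs : s ≠ 0) (h : ↑u * g = s • (g * ↑u)) :
    ↑u⁻¹ * g = s⁻¹ • (g * ↑u⁻¹) := by
  have h' : g * ↑u = s⁻¹ • (↑u * g) := by rw [h, smul_smul, inv_mul_cancel₀ hs, one_smul]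
  calc ↑u⁻¹ * g = ↑u⁻¹ * (g * ↑u) * ↑u⁻¹ := by simp [mul_assoc]
    _ = s⁻¹ • (g * ↑u⁻¹) := by
      rw [h', mul_smul_comm, smul_mul_assoc, ← mul_assoc, Units.inv_mul, one_mul]

theorem Units.zpow_mul_eq_smul_mul_zpow {u : Aˣ} (hs : s ≠ 0) (h : ↑u * g = s • (g * ↑u))
    (n : ℤ) : ↑(u ^ n) * g = s ^ n • (g * ↑(u ^ n)) := by
  obtain ⟨k, rfl | rfl⟩ := Int.eq_nat_or_neg n
  · simpa only [zpow_natCast, Units.val_pow_eq_pow_val] using pow_mul_eq_smul_mul_pow h k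
  · simpa only [zpow_neg, zpow_natCast, ← inv_pow, Units.val_pow_eq_pow_val] using
      pow_mul_eq_smul_mul_pow (inv_mul_eq_smul_mul_inv hs h) k

theorem Units.mul_zpow_eq_smul_zpow_mul {u : Aˣ} (hs : s ≠ 0) (h : ↑u * g = s • (g * ↑u))
    (n : ℤ) : g * ↑(u ^ n) = s ^ (-n) • (↑(u ^ n) * g) := by
  rw [zpow_mul_eq_smul_mul_zpow hs h, smul_smul, ← zpow_add₀ hs, neg_add_cancel, zpow_zero,
    one_smul]

end TwistedCommutation

theorem zpow_injective_of_not_isOfFinOrder {K : Type*} [GroupWithZero K] {x : K} (hx₀ : x ≠ 0)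
    (hx : ¬IsOfFinOrder x) : Function.Injective fun n : ℤ => x ^ n := by
  have hu : ¬IsOfFinOrder (Units.mk0 x hx₀) := by rwa [← Units.isOfFinOrder_val]
  intro a b hab
  exact injective_zpow_iff_not_isOfFinOrder.2 hu (Units.val_injective (by simpa using hab))

instance : Finite UqGen :=
  Finite.of_surjective ![UqGen.E, .F, .K, .Kinv] <| by
    rintro (_ | _ | _ | _)
    exacts [⟨0, rfl⟩, ⟨1, rfl⟩, ⟨2, rfl⟩, ⟨3, rfl⟩]

namespace Uq

variable {q : ℂ} {m : ℕ}

theorem induction_on {P : Uq q m → Prop} (u : Uq q m)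
    (algebraMap : ∀ r : ℂ, P (algebraMap ℂ (Uq q m) r)) (E : P (Egen q m)) (F : P (Fgen q m))
    (K : P (Kgen q m)) (Kinv : P (Kinvgen q m)) (add : ∀ a b, P a → P b → P (a + b))
    (mul : ∀ a b, P a → P b → P (a * b)) : P u := by
  obtain ⟨x, rfl⟩ := RingQuot.mkAlgHom_surjective ℂ (UqRel q m) u
  induction x using FreeAlgebra.induction with
  | grade0 r => simpa only [AlgHom.commutes] using algebraMap r
  | grade1 g => cases g <;> assumption
  | add a b ha hb => simpa only [map_add] using add _ _ ha hb
  | mul a b ha hb => simpa only [map_mul] using mul _ _ ha hb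

variable (q m)

theorem Kgen_mul_Egen : Kgen q m * Egen q m = q ^ 2 • (Egen q m * Kgen q m) := by
  simpa [Egen, Kgen] using RingQuot.mkAlgHom_rel ℂ (UqRel.KE (q := q) (m := m))

theorem Kgen_mul_Fgen : Kgen q m * Fgen q m = (q ^ 2)⁻¹ • (Fgen q m * Kgen q m) := by
  simpa [Fgen, Kgen] using RingQuot.mkAlgHom_rel ℂ (UqRel.KF (q := q) (m := m))

theorem Kgen_mul_Kinvgen : Kgen q m * Kinvgen q m = 1 := by
  simpa [Kinvgen, Kgen] using RingQuot.mkAlgHom_rel ℂ (UqRel.KKinv (q := q) (m := m))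

theorem Kinvgen_mul_Kgen : Kinvgen q m * Kgen q m = 1 := by
  simpa [Kinvgen, Kgen] using RingQuot.mkAlgHom_rel ℂ (UqRel.KinvK (q := q) (m := m))

theorem Egen_mul_Fgen : Egen q m * Fgen q m =
    Fgen q m * Egen q m + (q - q⁻¹)⁻¹ • (Kgen q m ^ m - Kinvgen q m ^ m) := by
  rw [← sub_eq_iff_eq_add']
  simpa [Egen, Fgen, Kgen, Kinvgen] using RingQuot.mkAlgHom_rel ℂ (UqRel.EF (q := q) (m := m))

def unitK : (Uq q m)ˣ := ⟨Kgen q m, Kinvgen q m, Kgen_mul_Kinvgen q m, Kinvgen_mul_Kgen q m⟩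

@[simp] theorem val_unitK : (unitK q m : Uq q m) = Kgen q m := rfl

@[simp] theorem val_inv_unitK : ((unitK q m)⁻¹ : (Uq q m)ˣ) = Kinvgen q m := rfl

variable {q}

theorem Kinvgen_mul_Egen (hq₀ : q ≠ 0) :
    Kinvgen q m * Egen q m = (q ^ 2)⁻¹ • (Egen q m * Kinvgen q m) :=
  Units.inv_mul_eq_smul_mul_inv (u := unitK q m) (pow_ne_zero 2 hq₀) (Kgen_mul_Egen q m)

theorem Kinvgen_mul_Fgen (hq₀ : q ≠ 0) :
    Kinvgen q m * Fgen q m = q ^ 2 • (Fgen q m * Kinvgen q m) := by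
  simpa using Units.inv_mul_eq_smul_mul_inv (u := unitK q m) (inv_ne_zero (pow_ne_zero 2 hq₀))
    (Kgen_mul_Fgen q m)

theorem commute_Casimir_Egen (hq₀ : q ≠ 0) (hqm : q ^ (2 * m) ≠ 1) :
    Commute (Casimir q m) (Egen q m) := by
  have hKE := pow_mul_eq_smul_mul_pow (Kgen_mul_Egen q m) m
  have hKinvE := pow_mul_eq_smul_mul_pow (Kinvgen_mul_Egen m hq₀) m
  have hd : q ^ (2 * m) - 1 ≠ 0 := sub_ne_zero.2 hqm
  have ht : q ^ (2 * m) ≠ 0 := pow_ne_zero _ hq₀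
  rw [Commute, SemiconjBy, Casimir, add_mul, add_mul, mul_add, mul_add, smul_mul_assoc,
    smul_mul_assoc, hKE, hKinvE, mul_smul_comm, mul_smul_comm, ← mul_assoc, Egen_mul_Fgen,
    add_mul, smul_mul_assoc, sub_mul (Kgen q m ^ m), hKE, hKinvE]
  simp only [mul_assoc, smul_smul, smul_sub]
  match_scalars
  · ring
  all_goals
    simp only [inv_pow, ← pow_mul]
    field_simp
    ring

theorem commute_Casimir_Fgen (hq₀ : q ≠ 0) (hqm : q ^ (2 * m) ≠ 1) :
    Commute (Casimir q m) (Fgen q m) := by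
  have hKF := pow_mul_eq_smul_mul_pow (Kgen_mul_Fgen q m) m
  have hKinvF := pow_mul_eq_smul_mul_pow (Kinvgen_mul_Fgen m hq₀) m
  have hd : q ^ (2 * m) - 1 ≠ 0 := sub_ne_zero.2 hqm
  have ht : q ^ (2 * m) ≠ 0 := pow_ne_zero _ hq₀
  rw [Commute, SemiconjBy, Casimir]
  simp only [add_mul, mul_add, smul_mul_assoc, mul_smul_comm, hKF, hKinvF, mul_assoc,
    Egen_mul_Fgen, mul_sub, smul_sub, smul_smul]
  match_scalars
  · ring
  all_goals
    simp only [inv_pow, ← pow_mul]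
    field_simp
    ring

theorem commute_Casimir_Kgen (hq₀ : q ≠ 0) : Commute (Casimir q m) (Kgen q m) := by
  have hKFE : Commute (Fgen q m * Egen q m) (Kgen q m) := by
    rw [Commute, SemiconjBy, eq_comm, ← mul_assoc, Kgen_mul_Fgen, smul_mul_assoc, mul_assoc, Kgen_mul_Egen, mul_smul_comm,
      smul_smul, inv_mul_cancel₀ (pow_ne_zero 2 hq₀), one_smul, mul_assoc]
  have hKKinv : Commute (Kgen q m) (Kinvgen q m) := by
    rw [Commute, SemiconjBy, Kgen_mul_Kinvgen, Kinvgen_mul_Kgen]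
  exact ((hKFE.add_left ((Commute.self_pow _ m).symm.smul_left _)).add_left
    ((hKKinv.symm.pow_left m).smul_left _))

theorem commute_Casimir (hq₀ : q ≠ 0) (hqm : q ^ (2 * m) ≠ 1) (u : Uq q m) :
    Commute (Casimir q m) u := by
  induction u using induction_on with
  | algebraMap r => exact Algebra.commute_algebraMap_right r _
  | E => exact commute_Casimir_Egen m hq₀ hqm
  | F => exact commute_Casimir_Fgen m hq₀ hqm
  | K => exact commute_Casimir_Kgen m hq₀
  | Kinv => simpa using (commute_Casimir_Kgen m hq₀).units_inv_right (u := unitK q m)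
  | add a b ha hb => exact ha.add_right hb
  | mul a b ha hb => exact ha.mul_right hb

theorem Egen_mul_unitK_zpow (hq₀ : q ≠ 0) (n : ℤ) :
    Egen q m * ↑(unitK q m ^ n) = (q ^ 2) ^ (-n) • (↑(unitK q m ^ n) * Egen q m) :=
  Units.mul_zpow_eq_smul_zpow_mul (pow_ne_zero 2 hq₀) (Kgen_mul_Egen q m) n

theorem Fgen_mul_unitK_zpow (hq₀ : q ≠ 0) (n : ℤ) :
    Fgen q m * ↑(unitK q m ^ n) = (q ^ 2) ^ n • (↑(unitK q m ^ n) * Fgen q m) := by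
  simpa using Units.mul_zpow_eq_smul_zpow_mul (inv_ne_zero (pow_ne_zero 2 hq₀))
    (Kgen_mul_Fgen q m) n

theorem injective_zpow_neg_mul {e : ℂ} (hq₀ : q ≠ 0) (hq : ¬IsOfFinOrder q) (he : e ≠ 0) :
    Function.Injective fun n : ℤ => (q ^ 2) ^ (-n) * e := by
  have hq2 : ¬IsOfFinOrder (q ^ 2) := by simpa [isOfFinOrder_pow] using hq
  exact (mul_left_injective₀ he).comp <|
    (zpow_injective_of_not_isOfFinOrder (pow_ne_zero 2 hq₀) hq2).comp neg_injective

theorem rank_le_aleph0 : Module.rank ℂ (Uq q m) ≤ ℵ₀ := by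
  calc Module.rank ℂ (Uq q m) ≤ Module.rank ℂ (FreeAlgebra ℂ UqGen) :=
        LinearMap.rank_le_of_surjective (RingQuot.mkAlgHom ℂ (UqRel q m)).toLinearMap
          (RingQuot.mkAlgHom_surjective ℂ (UqRel q m))
    _ ≤ ℵ₀ := by
        rw [FreeAlgebra.rank_eq, lift_le_aleph0]
        exact mk_le_aleph0

section WhittakerModule

variable {q : ℂ} {m : ℕ} {V : Type} [AddCommGroup V] [Module (Uq q m) V] {w : V} {e χ : ℂ}

variable (q m) in
def Kvec (w : V) (n : ℤ) : V := (↑(unitK q m ^ n) : Uq q m) • w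

theorem unitK_zpow_smul_Kvec (a n : ℤ) :
    (↑(unitK q m ^ a) : Uq q m) • Kvec q m w n = Kvec q m w (a + n) := by
  rw [Kvec, Kvec, ← mul_smul, ← Units.val_mul, ← zpow_add]

theorem Kvec_zero : Kvec q m w 0 = w := by simp [Kvec]

theorem Kvec_ne_zero (hw₀ : w ≠ 0) (n : ℤ) : Kvec q m w n ≠ 0 := by
  intro h
  have h' : (↑(unitK q m ^ (-n)) : Uq q m) • Kvec q m w n = 0 := by rw [h, smul_zero]
  rw [unitK_zpow_smul_Kvec, neg_add_cancel, Kvec_zero] at h'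
  exact hw₀ h'

variable [Module ℂ V] [IsScalarTower ℂ (Uq q m) V]

theorem Egen_smul_Kvec (hq₀ : q ≠ 0) (hw : Egen q m • w = algebraMap ℂ (Uq q m) e • w)
    (n : ℤ) : Egen q m • Kvec q m w n = ((q ^ 2) ^ (-n) * e) • Kvec q m w n := by
  rw [Kvec, ← mul_smul, Egen_mul_unitK_zpow m hq₀, smul_assoc, mul_smul, hw, algebraMap_smul,
    smul_comm _ e w, smul_smul]

variable (q m) in
abbrev spanKvec (w : V) : Submodule ℂ V := Submodule.span ℂ (Set.range (Kvec q m w))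

theorem Fgen_smul_mem_spanKvec (he : e ≠ 0) (hw : Egen q m • w = algebraMap ℂ (Uq q m) e • w)
    (hχ : Casimir q m • w = algebraMap ℂ (Uq q m) χ • w) : Fgen q m • w ∈ spanKvec q m w := by
  have hK : Kgen q m ^ m • w ∈ spanKvec q m w :=
    Submodule.subset_span ⟨(m : ℤ), by simp [Kvec]⟩
  have hKinv : Kinvgen q m ^ m • w ∈ spanKvec q m w :=
    Submodule.subset_span ⟨-(m : ℤ), by simp [Kvec]⟩
  have hrest : (Casimir q m - Fgen q m * Egen q m) • w ∈ spanKvec q m w := by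
    rw [Casimir, add_assoc, add_sub_cancel_left, add_smul, smul_assoc, smul_assoc]
    exact add_mem (Submodule.smul_mem _ _ hK) (Submodule.smul_mem _ _ hKinv)
  have hFw : e • Fgen q m • w = χ • w - (Casimir q m - Fgen q m * Egen q m) • w := by
    rw [sub_smul, hχ, mul_smul, hw, algebraMap_smul, algebraMap_smul, smul_comm, sub_sub_cancel]
  have hmem : e • Fgen q m • w ∈ spanKvec q m w := by
    rw [hFw]
    exact sub_mem (Submodule.smul_mem _ _ (Submodule.subset_span ⟨0, Kvec_zero⟩)) hrest
  simpa [smul_smul, inv_mul_cancel₀ he] using Submodule.smul_mem _ e⁻¹ hmem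

theorem smul_mem_spanKvec (hq₀ : q ≠ 0) (he : e ≠ 0)
    (hw : Egen q m • w = algebraMap ℂ (Uq q m) e • w)
    (hχ : Casimir q m • w = algebraMap ℂ (Uq q m) χ • w) (u : Uq q m) :
    ∀ v ∈ spanKvec q m w, u • v ∈ spanKvec q m w := by
  have of_Kvec : ∀ u : Uq q m, (∀ n, u • Kvec q m w n ∈ spanKvec q m w) →
      ∀ v ∈ spanKvec q m w, u • v ∈ spanKvec q m w := fun u hu =>
    Submodule.span_le (p := (spanKvec q m w).comap (DistribSMul.toLinearMap ℂ V u)).2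
      (Set.range_subset_iff.2 hu)
  have hKpow (a : ℤ) : ∀ v ∈ spanKvec q m w, (↑(unitK q m ^ a) : Uq q m) • v ∈ spanKvec q m w :=
    of_Kvec _ fun n => by rw [unitK_zpow_smul_Kvec]; exact Submodule.subset_span ⟨_, rfl⟩
  induction u using induction_on with
  | algebraMap r =>
    intro v hv
    rw [algebraMap_smul]
    exact Submodule.smul_mem _ r hv
  | E =>
    refine of_Kvec _ fun n => ?_
    rw [Egen_smul_Kvec hq₀ hw]
    exact Submodule.smul_mem _ _ (Submodule.subset_span ⟨n, rfl⟩)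
  | F =>
    refine of_Kvec _ fun n => ?_
    rw [Kvec, ← mul_smul, Fgen_mul_unitK_zpow m hq₀, smul_assoc, mul_smul]
    exact Submodule.smul_mem _ _ (hKpow n _ (Fgen_smul_mem_spanKvec he hw hχ))
  | K => simpa using hKpow 1
  | Kinv => simpa using hKpow (-1)
  | add a b ha hb =>
    intro v hv
    rw [add_smul]
    exact add_mem (ha v hv) (hb v hv)
  | mul a b ha hb =>
    intro v hv
    rw [mul_smul]
    exact ha _ (hb v hv)

theorem exists_sum_Kvec_eq (hq₀ : q ≠ 0) (he : e ≠ 0)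
    (hw : Egen q m • w = algebraMap ℂ (Uq q m) e • w) (hcyc : ∀ v : V, ∃ u : Uq q m, v = u • w)
    (hχ : Casimir q m • w = algebraMap ℂ (Uq q m) χ • w) (v : V) :
    ∃ (s : Finset ℤ) (c : ℤ → ℂ), ∑ n ∈ s, c n • Kvec q m w n = v := by
  obtain ⟨u, rfl⟩ := hcyc v
  obtain ⟨c, hc⟩ := Finsupp.mem_span_range_iff_exists_finsupp.1 <|
    smul_mem_spanKvec hq₀ he hw hχ u w (Submodule.subset_span ⟨0, Kvec_zero⟩)
  exact ⟨c.support, c, hc⟩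

theorem generator_mem_of_ne_zero_mem (hq₀ : q ≠ 0) (hq : ¬IsOfFinOrder q) (he : e ≠ 0)
    (hw : Egen q m • w = algebraMap ℂ (Uq q m) e • w) (hcyc : ∀ v : V, ∃ u : Uq q m, v = u • w)
    (hχ : Casimir q m • w = algebraMap ℂ (Uq q m) χ • w) {W : Submodule (Uq q m) V} {v : V}
    (hv : v ∈ W) (hv₀ : v ≠ 0) : w ∈ W := by
  obtain ⟨s, c, rfl⟩ := exists_sum_Kvec_eq hq₀ he hw hcyc hχ v
  obtain ⟨i, hi, hci⟩ : ∃ i ∈ s, c i ≠ 0 := by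
    by_contra! h
    exact hv₀ (Finset.sum_eq_zero fun i hi => by rw [h i hi, zero_smul])
  have hcKi : c i • Kvec q m w i ∈ W :=
    Module.End.smul_mem_of_sum_smul_mem (f := DistribSMul.toLinearMap ℂ V (Egen q m))
      (injective_zpow_neg_mul hq₀ hq he) (Egen_smul_Kvec hq₀ hw)
      (W := W.restrictScalars ℂ) (fun x hx => W.smul_mem _ hx) s c hv i hi
  have hKi : Kvec q m w i ∈ W := by
    simpa [smul_smul, inv_mul_cancel₀ hci] using (W.restrictScalars ℂ).smul_mem (c i)⁻¹ hcKi
  have hw_mem := W.smul_mem (↑(unitK q m ^ (-i))) hKi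
  rwa [unitK_zpow_smul_Kvec, neg_add_cancel, Kvec_zero] at hw_mem

theorem isSimpleModule_of_central_character (hq₀ : q ≠ 0) (hq : ¬IsOfFinOrder q) (he : e ≠ 0)
    (hw₀ : w ≠ 0) (hw : Egen q m • w = algebraMap ℂ (Uq q m) e • w)
    (hcyc : ∀ v : V, ∃ u : Uq q m, v = u • w)
    (hχ : Casimir q m • w = algebraMap ℂ (Uq q m) χ • w) : IsSimpleModule (Uq q m) V := by
  refine isSimpleModule_iff_toSpanSingleton_surjective.2 ⟨⟨w, 0, hw₀⟩, fun x hx y => ?_⟩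
  obtain ⟨a, ha⟩ := Submodule.mem_span_singleton.1 <|
    generator_mem_of_ne_zero_mem hq₀ hq he hw hcyc hχ (Submodule.mem_span_singleton_self x) hx
  obtain ⟨u, rfl⟩ := hcyc y
  exact ⟨u * a, by rw [LinearMap.toSpanSingleton_apply, mul_smul, ha]⟩

theorem exists_eq_algebraMap_smul_of_Egen_smul (hq₀ : q ≠ 0) (hq : ¬IsOfFinOrder q)
    (he : e ≠ 0) (hw₀ : w ≠ 0) (hw : Egen q m • w = algebraMap ℂ (Uq q m) e • w)
    (hcyc : ∀ v : V, ∃ u : Uq q m, v = u • w)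
    (hχ : Casimir q m • w = algebraMap ℂ (Uq q m) χ • w) {v : V}
    (hv : Egen q m • v = algebraMap ℂ (Uq q m) e • v) :
    ∃ c : ℂ, v = algebraMap ℂ (Uq q m) c • w := by
  obtain ⟨s, c, rfl⟩ := exists_sum_Kvec_eq hq₀ he hw hcyc hχ v
  have hmem := Module.End.sum_smul_mem_span_singleton
    (f := DistribSMul.toLinearMap ℂ V (Egen q m)) (injective_zpow_neg_mul hq₀ hq he)
    (Egen_smul_Kvec hq₀ hw) (Kvec_ne_zero hw₀) s c (i := 0)
    (by simpa only [DistribSMul.toLinearMap_apply, neg_zero, zpow_zero, one_mul,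
      algebraMap_smul] using hv)
  obtain ⟨a, ha⟩ := Submodule.mem_span_singleton.1 hmem
  exact ⟨a, by rw [algebraMap_smul, ← ha, Kvec_zero]⟩

theorem exists_central_character_of_isSimpleModule (hq₀ : q ≠ 0) (hqm : q ^ (2 * m) ≠ 1)
    (hcyc : ∀ v : V, ∃ u : Uq q m, v = u • w) [IsSimpleModule (Uq q m) V] :
    ∃ χ : ℂ, ∀ v : V, Casimir q m • v = algebraMap ℂ (Uq q m) χ • v := by
  have hrank : Module.rank ℂ V < #ℂ :=
    calc Module.rank ℂ V ≤ Module.rank ℂ (Uq q m) :=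
          LinearMap.rank_le_of_surjective
            ((LinearMap.toSpanSingleton (Uq q m) V w).restrictScalars ℂ)
            fun v => (hcyc v).imp fun _ hu => hu.symm
      _ ≤ ℵ₀ := rank_le_aleph0 m
      _ < #ℂ := Cardinal.mk_complex ▸ Cardinal.aleph0_lt_continuum
  obtain ⟨χ, hχ⟩ := IsSimpleModule.exists_forall_smul_eq_of_commute ℂ hrank
    (commute_Casimir m hq₀ hqm)
  exact ⟨χ, fun v => by rw [hχ, algebraMap_smul]⟩

end WhittakerModule

end Uq

/-- Let `V` be a Whittaker module for `U_q(f_m(K))` (cyclic, generated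
by a Whittaker vector `w` with `Ew = η(E)w`, `e = η(E) ≠ 0`). Then `V` is irreducible
if and only if `V` admits a central character (the Casimir `Ω` acts by a scalar,
equivalently `Z_V` is a maximal ideal of `ℂ[Ω]`); moreover, if `V` is irreducible then
the space of Whittaker vectors of `V` is one-dimensional, i.e. every Whittaker vector
is a scalar multiple of `w`. -/
theorem stmt17 (q : ℂ) (m : ℕ) (hm : 1 ≤ m) (hq0 : q ≠ 0)
    (hq : ∀ k : ℕ, 0 < k → q ^ k ≠ 1)
    (e : ℂ) (he : e ≠ 0)
    (V : Type) [AddCommGroup V] [Module (Uq q m) V]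
    (w : V) (hw0 : w ≠ 0)
    (hw : Egen q m • w = algebraMap ℂ (Uq q m) e • w)
    (hcyc : ∀ v : V, ∃ u : Uq q m, v = u • w) :
    (IsSimpleModule (Uq q m) V ↔
      ∃ χ : ℂ, ∀ v : V, Casimir q m • v = algebraMap ℂ (Uq q m) χ • v) ∧
    (IsSimpleModule (Uq q m) V →
      ∀ v : V, Egen q m • v = algebraMap ℂ (Uq q m) e • v →
        ∃ c : ℂ, v = algebraMap ℂ (Uq q m) c • w) := by
  let : Module ℂ V := Module.compHom V (algebraMap ℂ (Uq q m))
  have : IsScalarTower ℂ (Uq q m) V :=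
    ⟨fun c u v => by
      change (c • u) • v = algebraMap ℂ (Uq q m) c • u • v
      rw [Algebra.smul_def, mul_smul]⟩
  have hq' : ¬IsOfFinOrder q := by
    simpa [isOfFinOrder_iff_pow_eq_one] using hq
  have hqm : q ^ (2 * m) ≠ 1 := hq _ (by omega)
  have central_character : IsSimpleModule (Uq q m) V →
      ∃ χ : ℂ, ∀ v : V, Casimir q m • v = algebraMap ℂ (Uq q m) χ • v := fun _ =>
    Uq.exists_central_character_of_isSimpleModule hq0 hqm hcyc
  refine ⟨⟨central_character, fun ⟨χ, hχ⟩ => ?_⟩, fun hs v hv => ?_⟩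
  · exact Uq.isSimpleModule_of_central_character hq0 hq' he hw0 hw hcyc (hχ w)
  · obtain ⟨χ, hχ⟩ := central_character hs
    exact Uq.exists_eq_algebraMap_smul_of_Egen_smul hq0 hq' he hw0 hw hcyc (hχ w) hv
end
end
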